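/- arXiv:math/9709225 — 2 statements merged into one kernel-verified Lean document; each statement's English description precedes it below -/
import Mathlib

section
/- Suppose α_k, β_k, γ_k ∈ ℂ satisfy α_k β_k γ_k - (α_k + β_k + γ_k) + 2 = 0 and γ_k → ∞. Then α_k → ∞ if and only if β_k → 0, and α_k → 1 if and only if β_k → 1. -/
/-!
Dividing the index relation by `γ` and writing `c = γ⁻¹` gives `αβ - 1 = c (α + β - 2)`, so as
`c → 0` the relation degenerates to `αβ = 1`: the pair `(α, β)` becomes asymptotically
reciprocal on the Riemann sphere, and inversion fixes `1` and swaps `0` and `∞`. Each limit is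
read off from a rearrangement `y u = v` of the relation in which `u` tends to a nonzero limit;
the relation is symmetric in `α` and `β`, so `β → 1` gives `α → 1` as well.
-/

open Filter Topology Bornology

section Limits

variable {ι G₀ : Type*} {l : Filter ι}

theorem tendsto_div_of_eventually_mul_eq [GroupWithZero G₀] [TopologicalSpace G₀] [T1Space G₀]
    [ContinuousMul G₀] [ContinuousInv₀ G₀] {y u v : ι → G₀} {a b : G₀}
    (hu : Tendsto u l (𝓝 a)) (ha : a ≠ 0) (hv : Tendsto v l (𝓝 b))
    (h : ∀ᶠ k in l, y k * u k = v k) : Tendsto y l (𝓝 (b / a)) :=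
  (hv.div hu ha).congr' <| (h.and (hu.eventually_ne ha)).mono fun k ⟨hk, hu0⟩ => by
    simp only [Pi.div_apply, ← hk, mul_div_cancel_right₀ _ hu0]

theorem tendsto_cobounded_of_mul_tendsto {𝕜 : Type*} [NormedDivisionRing 𝕜] {x y : ι → 𝕜}
    {a : 𝕜} (hxy : Tendsto (fun k => x k * y k) l (𝓝 a)) (ha : a ≠ 0)
    (hy : Tendsto y l (𝓝 0)) : Tendsto x l (cobounded 𝕜) := by
  have hne : ∀ᶠ k in l, x k * y k ≠ 0 := hxy.eventually_ne ha
  have hinv : Tendsto (fun k => (x k)⁻¹) l (𝓝[≠] 0) := by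
    refine tendsto_nhdsWithin_iff.2 ⟨?_, hne.mono fun k hk => inv_ne_zero (left_ne_zero_of_mul hk)⟩
    simpa using tendsto_div_of_eventually_mul_eq hxy ha hy <|
      hne.mono fun k hk => inv_mul_cancel_left₀ (left_ne_zero_of_mul hk) _
  simpa [Function.comp_def] using tendsto_inv₀_nhdsNE_zero.comp hinv

end Limits

section AsymptoticallyReciprocal

variable {ι : Type*} {l : Filter ι}

theorem tendsto_one_of_mul_sub_one_eq {K : Type*} [Field K] [TopologicalSpace K]
    [IsTopologicalDivisionRing K] [T1Space K] {α β c : ι → K} (hc : Tendsto c l (𝓝 0))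
    (hrel : ∀ᶠ k in l, α k * β k - 1 = c k * (α k + β k - 2))
    (hα : Tendsto α l (𝓝 1)) : Tendsto β l (𝓝 1) := by
  have hu : Tendsto (fun k => α k - c k) l (𝓝 1) := by simpa using hα.sub hc
  have hv : Tendsto (fun k => (α k - 1) * (c k - 1)) l (𝓝 0) := by
    simpa using (hα.sub_const 1).mul (hc.sub_const 1)
  have := tendsto_div_of_eventually_mul_eq (y := fun k => β k - 1) hu one_ne_zero hv <|
    hrel.mono fun k hk => by linear_combination hk
  simpa [tendsto_sub_nhds_zero_iff] using this

variable {𝕜 : Type*} [NormedField 𝕜] {α β c : ι → 𝕜} (hc : Tendsto c l (𝓝 0))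
  (hrel : ∀ᶠ k in l, α k * β k - 1 = c k * (α k + β k - 2))
include hc hrel

theorem tendsto_zero_of_mul_sub_one_eq (hα : Tendsto α l (cobounded 𝕜)) :
    Tendsto β l (𝓝 0) := by
  have hα' : Tendsto (fun k => (α k)⁻¹) l (𝓝 0) := tendsto_inv₀_cobounded.comp hα
  have hu : Tendsto (fun k => 1 - c k * (α k)⁻¹) l (𝓝 1) := by simpa using (hc.mul hα').const_sub 1
  have hv : Tendsto (fun k => (α k)⁻¹ + c k * (1 - 2 * (α k)⁻¹)) l (𝓝 0) := by
    simpa using hα'.add (hc.mul ((hα'.const_mul 2).const_sub 1))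
  simpa using tendsto_div_of_eventually_mul_eq hu one_ne_zero hv <|
    (hrel.and (hα.eventually_ne_cobounded 0)).mono fun k ⟨hk, hα0⟩ => by
      field_simp
      linear_combination hk

theorem tendsto_cobounded_of_mul_sub_one_eq (hβ : Tendsto β l (𝓝 0)) :
    Tendsto α l (cobounded 𝕜) := by
  refine tendsto_cobounded_of_mul_tendsto (y := fun k => β k - c k) ?_ one_ne_zero
    (by simpa using hβ.sub hc)
  have hlim : Tendsto (fun k => 1 + c k * (β k - 2)) l (𝓝 1) := by
    simpa using (hc.mul (hβ.sub_const 2)).const_add 1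
  exact hlim.congr' <| hrel.mono fun k hk => by linear_combination -hk

end AsymptoticallyReciprocal

/-- If `α_k β_k γ_k - (α_k+β_k+γ_k) + 2 = 0` and `γ_k → ∞`, then `α_k → ∞` iff
`β_k → 0`, and `α_k → 1` iff `β_k → 1`. -/
theorem stmt_15 (α β γ : ℕ → ℂ)
    (hrel : ∀ k, α k * β k * γ k - (α k + β k + γ k) + 2 = 0)
    (hγ : Filter.Tendsto (fun k => ‖γ k‖) Filter.atTop Filter.atTop) :
    (Filter.Tendsto (fun k => ‖α k‖) Filter.atTop Filter.atTop ↔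
      Filter.Tendsto β Filter.atTop (nhds 0)) ∧
    (Filter.Tendsto α Filter.atTop (nhds 1) ↔
      Filter.Tendsto β Filter.atTop (nhds 1)) := by
  rw [tendsto_norm_atTop_iff_cobounded] at hγ ⊢
  have hc : Tendsto (fun k => (γ k)⁻¹) atTop (𝓝 0) := tendsto_inv₀_cobounded.comp hγ
  have hαβ : ∀ᶠ k in atTop, α k * β k - 1 = (γ k)⁻¹ * (α k + β k - 2) :=
    (hγ.eventually_ne_cobounded 0).mono fun k hγ0 => by
      field_simp
      linear_combination hrel k
  have hβα : ∀ᶠ k in atTop, β k * α k - 1 = (γ k)⁻¹ * (β k + α k - 2) :=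
    hαβ.mono fun k hk => by linear_combination hk
  exact ⟨⟨tendsto_zero_of_mul_sub_one_eq hc hαβ, tendsto_cobounded_of_mul_sub_one_eq hc hαβ⟩,
    ⟨tendsto_one_of_mul_sub_one_eq hc hαβ, tendsto_one_of_mul_sub_one_eq hc hβα⟩⟩
end

section
/- Substituting ρ = -3 into the line ρW - 2X - Y (defining Per_2(-3)) gives -3W - 2X - Y, and this linear form divides the polynomial defining Per_3(1), namely W³ - [WX(2X+Y) + 3W²X + 2W³] + (X+Y)²(2X+Y) - WX(X+2Y) + 12W²X + 28W³. -/
theorem per3_one_cubic_eq_mul {R : Type*} [CommRing R] (W X Y : R) :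
    W ^ 3 - (W * X * (2 * X + Y) + 3 * W ^ 2 * X + 2 * W ^ 3) +
        (X + Y) ^ 2 * (2 * X + Y) - W * X * (X + 2 * Y) + 12 * W ^ 2 * X + 28 * W ^ 3 =
      (-3 * W - 2 * X - Y) * (-9 * W ^ 2 + 3 * W * X + 3 * W * Y - X ^ 2 - 2 * X * Y - Y ^ 2) := by
  ring

theorem stmt_19_general (W X Y : MvPolynomial (Fin 3) ℂ) :
    (-3 * W - 2 * X - Y) ∣
      (W ^ 3 - (W * X * (2 * X + Y) + 3 * W ^ 2 * X + 2 * W ^ 3) +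
        (X + Y) ^ 2 * (2 * X + Y) - W * X * (X + 2 * Y) + 12 * W ^ 2 * X + 28 * W ^ 3) :=
  Dvd.intro _ (per3_one_cubic_eq_mul W X Y).symm

/-- The linear form `-3W - 2X - Y` defining `Per_2(-3)` divides the homogeneous cubic
defining `Per_3(1)`. -/
theorem stmt_19 (W X Y : MvPolynomial (Fin 3) ℂ)
    (hW : W = MvPolynomial.X 0) (hX : X = MvPolynomial.X 1) (hY : Y = MvPolynomial.X 2) :
    (-3 * W - 2 * X - Y) ∣
      (W ^ 3 - (W * X * (2 * X + Y) + 3 * W ^ 2 * X + 2 * W ^ 3) +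
        (X + Y) ^ 2 * (2 * X + Y) - W * X * (X + 2 * Y) + 12 * W ^ 2 * X + 28 * W ^ 3) :=
  stmt_19_general W X Y
end
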